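/- If x, y ∈ ℝ² satisfy sup_{n ≥ 0} ‖F^{−n}(x) − F^{−n}(y)‖ < ∞ (the backward orbits of x and y stay at bounded distance), then H(y) − H(x) ∈ E^u, the unstable subspace of A. -/

import Mathlib

noncomputable section

abbrev E2 : Type := EuclideanSpace ℝ (Fin 2)

/-- Action of a real matrix on `ℝ²`. -/
def matActR (A : Matrix (Fin 2) (Fin 2) ℝ) (x : E2) : E2 :=
  (WithLp.equiv 2 (Fin 2 → ℝ)).symm (A.mulVec ((WithLp.equiv 2 (Fin 2 → ℝ)) x))

/-! The backward orbit of `F` is carried by `H` to the backward orbit of `A`, and `H` moves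
points by at most `K`; so two backward `F`-orbits at distance `≤ C` are carried to backward
`A`-orbits at distance `≤ C + 2K`, i.e. `A⁻ⁿ (H y - H x)` stays bounded. -/

lemma matActR_mul (M N : Matrix (Fin 2) (Fin 2) ℝ) (v : E2) :
    matActR (M * N) v = matActR M (matActR N v) := by
  simp only [matActR, Equiv.apply_symm_apply, Matrix.mulVec_mulVec]

lemma matActR_one (v : E2) : matActR 1 v = v := by
  simp [matActR]

lemma matActR_sub (M : Matrix (Fin 2) (Fin 2) ℝ) (u v : E2) :
    matActR M (u - v) = matActR M u - matActR M v := by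
  simp only [matActR, WithLp.equiv_apply, WithLp.equiv_symm_apply, WithLp.ofLp_sub,
    Matrix.mulVec_sub, WithLp.toLp_sub]

lemma matActR_pow (M : Matrix (Fin 2) (Fin 2) ℝ) (n : ℕ) :
    matActR (M ^ n) = (matActR M)^[n] := by
  induction n with
  | zero => funext v; exact matActR_one v
  | succ n ih => funext v; rw [pow_succ, matActR_mul, ih, Function.iterate_succ_apply]

lemma Function.semiconj_invFun_of_leftInverse {α β : Type*} [Nonempty α] {F : α → α}
    (hF : Function.Surjective F) {H : α → β} {A B : β → β}
    (hconj : ∀ x, H (F x) = A (H x)) (hBA : Function.LeftInverse B A) :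
    Function.Semiconj H (Function.invFun F) B := fun z => by
  conv_rhs => rw [← Function.rightInverse_invFun hF z, hconj, hBA]

lemma norm_sub_le_of_forall_norm_sub_self_le {E : Type*} [SeminormedAddCommGroup E]
    {H : E → E} {K : ℝ} (hH : ∀ x, ‖H x - x‖ ≤ K) (a b : E) :
    ‖H a - H b‖ ≤ ‖a - b‖ + 2 * K := by
  have hsplit : H a - H b = (a - b) + (H a - a) - (H b - b) := by abel
  calc ‖H a - H b‖ ≤ ‖(a - b) + (H a - a)‖ + ‖H b - b‖ := hsplit ▸ norm_sub_le _ _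
    _ ≤ ‖a - b‖ + ‖H a - a‖ + ‖H b - b‖ := by gcongr; exact norm_add_le _ _
    _ ≤ ‖a - b‖ + 2 * K := by linarith [hH a, hH b]

theorem stmt_13_general (A B : Matrix (Fin 2) (Fin 2) ℝ)
    (hBA : B * A = 1)
    (F : E2 → E2) (hF : Function.Bijective F)
    (H : E2 → E2) (K : ℝ) (hH : ∀ x : E2, ‖H x - x‖ ≤ K)
    (hconj : ∀ x : E2, H (F x) = matActR A (H x))
    (x y : E2) (C : ℝ)
    (hxy : ∀ n : ℕ, ‖(Function.invFun F)^[n] x - (Function.invFun F)^[n] y‖ ≤ C) :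
    ∃ D : ℝ, ∀ n : ℕ, ‖matActR (B ^ n) (H y - H x)‖ ≤ D := by
  have hBA' : Function.LeftInverse (matActR B) (matActR A) := fun v => by
    rw [← matActR_mul, hBA, matActR_one]
  have hsemiconj := (Function.semiconj_invFun_of_leftInverse hF.surjective hconj hBA').iterate_right
  refine ⟨C + 2 * K, fun n => ?_⟩
  rw [matActR_sub, matActR_pow, ← hsemiconj n, ← hsemiconj n]
  calc _ ≤ _ := norm_sub_le_of_forall_norm_sub_self_le hH _ _
    _ ≤ C + 2 * K := by rw [norm_sub_rev]; linarith [hxy n]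

/-- points whose backward orbits stay at bounded distance are mapped by `H`
to the same unstable line, i.e. `H y - H x` lies in the unstable subspace
`Eᵘ = {w : sup_{n ≥ 0} ‖A⁻ⁿ w‖ < ∞}` of `A`. -/
theorem stmt_13 (A B : Matrix (Fin 2) (Fin 2) ℝ)
    (hAB : A * B = 1) (hBA : B * A = 1)
    (hhyp : ∀ μ : ℂ, (A.map (Complex.ofReal : ℝ → ℂ)).charpoly.IsRoot μ → ‖μ‖ ≠ 1)
    (F : E2 → E2) (hF : Function.Bijective F)
    (H : E2 → E2) (K : ℝ) (hH : ∀ x : E2, ‖H x - x‖ ≤ K)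
    (hconj : ∀ x : E2, H (F x) = matActR A (H x))
    (x y : E2) (C : ℝ)
    (hxy : ∀ n : ℕ, ‖(Function.invFun F)^[n] x - (Function.invFun F)^[n] y‖ ≤ C) :
    ∃ D : ℝ, ∀ n : ℕ, ‖matActR (B ^ n) (H y - H x)‖ ≤ D :=
  stmt_13_general A B hBA F hF H K hH hconj x y C hxy
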